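/- 1 ⊵ 0 in the prefix TBM relation: for all quaternary strings y and z, if 1y ≽ 0z then 10y ≽ 00z and 11y ≽ 01z. -/
import Mathlib


/-- `I₀(x)=x²`, `I₁(x)=1-(1-x)²`, `I₂(x)=√x`, `I₃(x)=1-√(1-x)`. -/
noncomputable def If4 (q : Fin 4) : ℝ → ℝ := fun x =>
  if q = 0 then x ^ 2
  else if q = 1 then 1 - (1 - x) ^ 2
  else if q = 2 then Real.sqrt x
  else 1 - Real.sqrt (1 - x)

/-- For a quaternary string `q = q₁⋯qₙ`, apply `I_{q₁}` first, then `I_{q₂}`, etc. -/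
noncomputable def Iquat (q : List (Fin 4)) (x : ℝ) : ℝ := q.foldl (fun y c => If4 c y) x

/-- The formal inverse string: reversal with `0↔2`, `1↔3` swapped. -/
def qinv (q : List (Fin 4)) : List (Fin 4) := (q.map (· + 2)).reverse

/-- `p ≽ q` iff `I_p(x) ≥ I_q(x)` for all `x ∈ [0,1]`. -/
def geQ (p q : List (Fin 4)) : Prop := ∀ x ∈ Set.Icc (0:ℝ) 1, Iquat p x ≥ Iquat q x

/-- Each basic map sends `[0,1]` into `[0,1]`. -/
lemma If4_mem (c : Fin 4) {x : ℝ} (hx : x ∈ Set.Icc (0:ℝ) 1) :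
    If4 c x ∈ Set.Icc (0:ℝ) 1 := by
  obtain ⟨h0, h1⟩ := hx
  rw [Set.mem_Icc]
  fin_cases c <;> simp only [If4] <;> norm_num [Fin.ext_iff, abs_le]
  all_goals first
    | exact h1
    | exact h0
    | exact ⟨⟨by linarith, by linarith⟩, by positivity⟩
    | positivity
    | nlinarith
    | constructor <;> nlinarith
    | exact ⟨by positivity, by linarith, by linarith⟩

/-- Each basic map is monotone on `[0,1]`. -/
lemma If4_mono (c : Fin 4) {x y : ℝ} (hx : x ∈ Set.Icc (0:ℝ) 1)
    (hy : y ∈ Set.Icc (0:ℝ) 1) (hxy : x ≤ y) : If4 c x ≤ If4 c y := by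
  obtain ⟨hx0, hx1⟩ := hx
  obtain ⟨hy0, hy1⟩ := hy
  fin_cases c <;> simp only [If4] <;> norm_num [Fin.ext_iff]
  all_goals first
    | nlinarith
    | exact Real.sqrt_le_sqrt hxy
    | { have := Real.sqrt_le_sqrt (show 1 - y ≤ 1 - x by linarith); linarith }

/-- The key pointwise inequality `I₀ ∘ I₁ ≥ I₁ ∘ I₀` on `[0,1]`. -/
lemma If4_key {x : ℝ} (hx : x ∈ Set.Icc (0:ℝ) 1) :
    If4 1 (If4 0 x) ≤ If4 0 (If4 1 x) := by
  obtain ⟨h0, h1⟩ := hx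
  simp only [If4]
  norm_num [Fin.ext_iff]
  nlinarith [sq_nonneg (x * (1 - x))]

lemma Iquat_cons (c : Fin 4) (q : List (Fin 4)) (x : ℝ) :
    Iquat (c :: q) x = Iquat q (If4 c x) := rfl

/-- `Iquat q` is monotone on `[0,1]`. -/
lemma Iquat_mono (q : List (Fin 4)) : ∀ {x y : ℝ}, x ∈ Set.Icc (0:ℝ) 1 →
    y ∈ Set.Icc (0:ℝ) 1 → x ≤ y → Iquat q x ≤ Iquat q y := by
  induction q with
  | nil => intro x y _ _ h; exact h
  | cons c q ih =>
      intro x y hx hy hxy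
      rw [Iquat_cons, Iquat_cons]
      exact ih (If4_mem c hx) (If4_mem c hy) (If4_mono c hx hy hxy)

theorem tbm_one_zero :
    ∀ y z : List (Fin 4), geQ ([1] ++ y) ([0] ++ z) →
      geQ ([1, 0] ++ y) ([0, 0] ++ z) ∧ geQ ([1, 1] ++ y) ([0, 1] ++ z) := by
  intro y z h
  constructor
  · intro x hx
    have hx0 := If4_mem 0 hx
    have h1x := If4_mem 1 hx
    have h01 := If4_mem 0 h1x
    have h10 := If4_mem 1 hx0
    have hy : Iquat y (If4 1 (If4 0 x)) ≤ Iquat y (If4 0 (If4 1 x)) :=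
      Iquat_mono y h10 h01 (If4_key hx)
    have hz := h (If4 0 x) hx0
    simp only [List.cons_append, List.nil_append, Iquat_cons] at hz ⊢
    exact le_trans hz hy
  · intro x hx
    have hx0 := If4_mem 0 hx
    have h1x := If4_mem 1 hx
    have h01 := If4_mem 0 h1x
    have h10 := If4_mem 1 hx0
    have hz : Iquat z (If4 1 (If4 0 x)) ≤ Iquat z (If4 0 (If4 1 x)) :=
      Iquat_mono z h10 h01 (If4_key hx)
    have hy := h (If4 1 x) h1x
    simp only [List.cons_append, List.nil_append, Iquat_cons] at hy ⊢
    exact le_trans hz hy
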